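/- 𝒢 = −2·E·Q·E + P. -/
import Mathlib


/-- The matrix `𝒢` for even `n` (rows/columns `1, …, p+3` of the paper are
indexed here by `0, …, p+2`). -/
def Geven (p : ℕ) : Matrix (Fin (p + 3)) (Fin (p + 3)) ℚ :=
  Matrix.of fun i j =>
    if i.1 < p ∧ j.1 < p then
      -2 * ((min i.1 j.1 : ℕ) + 1 : ℚ) + (if i = j then 1 else 0)
    else if i.1 < p ∧ j.1 = p then -2 * ((i.1 : ℚ) + 1)
    else if i.1 = p ∧ j.1 < p then -2 * ((j.1 : ℚ) + 1)
    else if i.1 = p ∧ j.1 = p then -2 * (p : ℚ) - 1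
    else if (i.1 = p ∧ j.1 = p + 1) ∨ (i.1 = p + 1 ∧ j.1 = p) then -1
    else if (i.1 = p ∧ j.1 = p + 2) ∨ (i.1 = p + 2 ∧ j.1 = p) then -2
    else if i.1 = p + 1 ∧ j.1 = p + 1 then 2
    else if (i.1 = p + 1 ∧ j.1 = p + 2) ∨ (i.1 = p + 2 ∧ j.1 = p + 1) then 1
    else 0

/-- The kinematical kernel matrix `Q` for even `n`. -/
def Qeven (p : ℕ) : Matrix (Fin (p + 3)) (Fin (p + 3)) ℚ :=
  Matrix.of fun i j =>
    if i.1 < p ∧ j.1 < p then ((min i.1 j.1 : ℕ) + 1 : ℚ)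
    else if i.1 < p ∧ j.1 = p then ((i.1 : ℚ) + 1)
    else if i.1 = p ∧ j.1 < p then ((j.1 : ℚ) + 1)
    else if i.1 = p ∧ j.1 = p then (p : ℚ) + 1
    else if (i.1 = p ∧ j.1 = p + 1) ∨ (i.1 = p + 1 ∧ j.1 = p) then -1/2
    else if (i.1 = p ∧ j.1 = p + 2) ∨ (i.1 = p + 2 ∧ j.1 = p) then -1
    else if i.1 = p + 1 ∧ j.1 = p + 1 then -1
    else if (i.1 = p + 1 ∧ j.1 = p + 2) ∨ (i.1 = p + 2 ∧ j.1 = p + 1) then -1/2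
    else 0

/-- `E = diag(1,…,1,-1,-1)` (first `p+1` entries `1`). -/
def Eeven (p : ℕ) : Matrix (Fin (p + 3)) (Fin (p + 3)) ℚ :=
  Matrix.diagonal fun i => if i.1 < p + 1 then 1 else -1

/-- `P = diag(1,…,1,0,0)` (first `p+1` entries `1`). -/
def Peven (p : ℕ) : Matrix (Fin (p + 3)) (Fin (p + 3)) ℚ :=
  Matrix.diagonal fun i => if i.1 < p + 1 then 1 else 0

/-- Section 4.1 of the paper (even twist knots): `𝒢 = -2·E·Q·E + P`. -/
theorem stmt_18 (p : ℕ) (hp : 2 ≤ p) :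
    Geven p = (-2 : ℚ) • (Eeven p * Qeven p * Eeven p) + Peven p := by
  ext i j
  have hi2 := i.2
  have hj2 := j.2
  have hi : i.1 < p ∨ i.1 = p ∨ i.1 = p+1 ∨ i.1 = p+2 := by omega
  have hj : j.1 < p ∨ j.1 = p ∨ j.1 = p+1 ∨ j.1 = p+2 := by omega
  have hij : (i = j) ↔ (i.1 = j.1) := Fin.ext_iff
  simp only [Geven, Qeven, Eeven, Peven, Matrix.diagonal_mul, Matrix.mul_diagonal,
    Matrix.add_apply, Matrix.smul_apply, Matrix.diagonal_apply, Matrix.of_apply,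
    smul_eq_mul, Fin.mk_eq_mk]
  rcases hi with hi|hi|hi|hi <;> rcases hj with hj|hj|hj|hj <;>
    simp [hij, hi, hj, show ¬ (p+1 < p+1) from by omega, show ¬ (p+2 < p+1) from by omega] <;>
    (try split_ifs) <;> (try omega) <;> ring
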